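/- Let ℓ ≥ 3 be an integer and λ₁,…,λ₆ be integers with 1 ≤ λᵢ ≤ ℓ for all i. Suppose the ten inequalities (J-1)–(J-10) hold: (J-1) 2ℓ+2 ≤ λ₁+λ₂+λ₃+λ₄+λ₅+λ₆; (J-2) λ₁+λ₂ ≤ 2ℓ−1; (J-3) λ₃+λ₄ ≤ 2ℓ−1; (J-4) 2+λ₁+λ₂ ≤ λ₃+λ₄+λ₅+λ₆; (J-5) 2+λ₃+λ₄ ≤ λ₁+λ₂+λ₅+λ₆; (J-6) λ₁+λ₂+λ₃+λ₄ ≤ 2ℓ−2+λ₅+λ₆; (J-7) λ₁+λ₂+λ₅+λ₆ ≥ ℓ+2; (J-8) λ₃+λ₄+λ₅+λ₆ ≥ ℓ+2; (J-9) λ₁+λ₂ ≤ ℓ−2+λ₅+λ₆; (J-10) λ₃+λ₄ ≤ ℓ−2+λ₅+λ₆. Then there exist integers α, β with 0 ≤ α, β ≤ ℓ, α ≡ λ₁+λ₂ (mod 2), β ≡ λ₃+λ₄ (mod 2), |λ₁−λ₂| ≤ α ≤ λ₁+λ₂, α ≤ 2ℓ−λ₁−λ₂, |λ₃−λ₄|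 ≤ β ≤ λ₃+λ₄, β ≤ 2ℓ−λ₃−λ₄, α+β+λ₅+λ₆ ≥ 2ℓ+2, |α−β| ≤ λ₅+λ₆, and |λ₅−λ₆| ≤ α+β ≤ 4ℓ−λ₅−λ₆. -/
import Mathlib


/-- Existence half of the `n = 6` Lemma for the F-curve `F_{{1,2},{3,4},{5},{6}}`:
the ten inequalities (J-1)–(J-10) imply the existence of attaching weights `α, β` in
`[0, ℓ]` with the required parities, satisfying the fusion-rule inequalities for the
triples `(λ₁, λ₂, α)` and `(λ₃, λ₄, β)` and the degree and fusion conditions on the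
quadruple `(α, β, λ₅, λ₆)`. -/
theorem exists_attaching_weights (ℓ l1 l2 l3 l4 l5 l6 : ℤ) (hℓ : 3 ≤ ℓ)
    (h1 : 1 ≤ l1) (h1' : l1 ≤ ℓ) (h2 : 1 ≤ l2) (h2' : l2 ≤ ℓ)
    (h3 : 1 ≤ l3) (h3' : l3 ≤ ℓ) (h4 : 1 ≤ l4) (h4' : l4 ≤ ℓ)
    (h5 : 1 ≤ l5) (h5' : l5 ≤ ℓ) (h6 : 1 ≤ l6) (h6' : l6 ≤ ℓ)
    (hJ1 : 2 * ℓ + 2 ≤ l1 + l2 + l3 + l4 + l5 + l6)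
    (hJ2 : l1 + l2 ≤ 2 * ℓ - 1)
    (hJ3 : l3 + l4 ≤ 2 * ℓ - 1)
    (hJ4 : 2 + l1 + l2 ≤ l3 + l4 + l5 + l6)
    (hJ5 : 2 + l3 + l4 ≤ l1 + l2 + l5 + l6)
    (hJ6 : l1 + l2 + l3 + l4 ≤ 2 * ℓ - 2 + l5 + l6)
    (hJ7 : ℓ + 2 ≤ l1 + l2 + l5 + l6)
    (hJ8 : ℓ + 2 ≤ l3 + l4 + l5 + l6)
    (hJ9 : l1 + l2 ≤ ℓ - 2 + l5 + l6)
    (hJ10 : l3 + l4 ≤ ℓ - 2 + l5 + l6) :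
    ∃ a b : ℤ,
      0 ≤ a ∧ a ≤ ℓ ∧ 0 ≤ b ∧ b ≤ ℓ ∧
      a % 2 = (l1 + l2) % 2 ∧ b % 2 = (l3 + l4) % 2 ∧
      |l1 - l2| ≤ a ∧ a ≤ l1 + l2 ∧ a ≤ 2 * ℓ - l1 - l2 ∧
      |l3 - l4| ≤ b ∧ b ≤ l3 + l4 ∧ b ≤ 2 * ℓ - l3 - l4 ∧
      2 * ℓ + 2 ≤ a + b + l5 + l6 ∧
      |a - b| ≤ l5 + l6 ∧ |l5 - l6| ≤ a + b ∧ a + b ≤ 4 * ℓ - l5 - l6 := by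
  refine ⟨min (l1 + l2) (2 * ℓ - l1 - l2), min (l3 + l4) (2 * ℓ - l3 - l4), ?_⟩
  simp only [abs_le]
  omega
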